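/- arXiv:1611.05398 — 2 statements merged into one kernel-verified Lean document; each statement's English description precedes it below -/
import Mathlib

section
/- Let U ⊆ ℝ² be open and let ψ and L be real-analytic functions on U satisfying ∂^{1,1}ψ = L·∂²_tψ on U. Then there exist real-analytic functions Q^{k,ℓ}_j on U, defined for all integers k,ℓ ≥ 1 and 2 ≤ j ≤ k+ℓ, such that ∂^{k,ℓ}ψ = Σ_{j=2}^{k+ℓ} Q^{k,ℓ}_j ∂^j_tψ on U, and which satisfy the relations: Q^{1,1}_2 = L; for every k ≥ 2: Q^{k,1}_2 = ∂_s Q^{k−1,1}_2 + Σ_{j=2}^{k} Q^{k−1,1}_j ∂^{j−1}_t L, Q^{k,1}_j = ∂_s Q^{k−1,1}_j + Σ_{r=j−1}^{k} C(r−1, j−2) Q^{k−1,1}_r ∂^{r+1−j}_t L for 3 ≤ j ≤ k, and Q^{k,1}_{k+1} = L^k; and for every ℓ ≥ 2 and k ≥ 1: Q^{k,ℓ}_2 = ∂_t Q^{k,ℓ−1}_2, Q^{k,ℓ}_j = ∂_t Q^{k,ℓ−1}_j + Q^{k,ℓ−1}_{j−1} for 3 ≤ j ≤ k+ℓ−1,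 and Q^{k,ℓ}_{k+ℓ} = L^k. -/
open MeasureTheory Filter

/-- mixed partial derivative ∂^{k,ℓ}ψ = ∂^{k+ℓ}ψ/∂s^k∂t^ℓ. -/
noncomputable def pd (ψ : ℝ → ℝ → ℝ) (k l : ℕ) (s t : ℝ) : ℝ :=
  iteratedDeriv k (fun s' => iteratedDeriv l (ψ s') t) s

/-!
Near every point of `U` all functions involved are analytic, so the directional derivatives
`∂ₛ`, `∂ₜ` along `(1, 0)` and `(0, 1)` commute there and `pd` is obtained by iterating them.
Applying `∂ₜ^{j-1}` to `∂ₛ∂ₜψ = L ∂ₜ²ψ` and expanding with Leibniz's rule writes `∂ₛ∂ₜ^jψ` in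
pure `t`-derivatives of `ψ`. Applying `∂ₛ` (for `ℓ = 1`) or `∂ₜ` (for `ℓ ≥ 2`) to the
representation of `∂^{k,ℓ}ψ` and collecting the coefficient of each `∂ₜ^jψ` produces exactly
the stated recursions, which are therefore taken as the definition of the coefficients.
-/

open Finset Topology

section IccSums

variable {M : Type*} [AddCommMonoid M] {f : ℕ → M}

theorem sum_Icc_succ_bot_of_eq_zero {a : ℕ} (hf : f a = 0) (b : ℕ) :
    ∑ j ∈ Icc (a + 1) b, f j = ∑ j ∈ Icc a b, f j :=
  sum_subset (Icc_subset_Icc_left (Nat.le_succ a)) fun j hj hj' => by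
    obtain rfl : j = a := by simp only [mem_Icc, not_and, not_le] at hj hj'; omega
    exact hf

theorem sum_Icc_succ_top_of_eq_zero {b : ℕ} (hf : f (b + 1) = 0) (a : ℕ) :
    ∑ j ∈ Icc a (b + 1), f j = ∑ j ∈ Icc a b, f j :=
  (sum_subset (Icc_subset_Icc_right (Nat.le_succ b)) fun j hj hj' => by
    obtain rfl : j = b + 1 := by simp only [mem_Icc, not_and, not_le] at hj hj'; omega
    exact hf).symm

theorem sum_Icc_shift (g : ℕ → M) (a b : ℕ) :
    ∑ j ∈ Icc a b, g (j + 1) = ∑ m ∈ Icc (a + 1) (b + 1), g m :=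
  sum_nbij' (· + 1) (· - 1) (fun j hj => by simp only [mem_Icc] at hj ⊢; omega)
    (fun j hj => by simp only [mem_Icc] at hj ⊢; omega) (fun j _ => by simp)
    (fun j hj => by simp only [mem_Icc] at hj; omega) (fun j _ => rfl)

end IccSums

section DirDeriv

variable {E : Type*} [NormedAddCommGroup E] [NormedSpace ℝ E] {F G : E → ℝ} {p : E}

noncomputable def dirDeriv (v : E) (F : E → ℝ) : E → ℝ := fun p => fderiv ℝ F p v

@[simp]
theorem dirDeriv_zero (v : E) : dirDeriv v (0 : E → ℝ) = 0 := by
  ext p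
  simp [dirDeriv]

protected theorem AnalyticAt.dirDeriv (h : AnalyticAt ℝ F p) (v : E) :
    AnalyticAt ℝ (dirDeriv v F) p :=
  ((ContinuousLinearMap.apply ℝ ℝ v).analyticAt _).comp h.fderiv

theorem AnalyticAt.iterate_dirDeriv (h : AnalyticAt ℝ F p) (v : E) (m : ℕ) :
    AnalyticAt ℝ ((dirDeriv v)^[m] F) p := by
  induction m with
  | zero => exact h
  | succ m ih => rw [Function.iterate_succ_apply']; exact ih.dirDeriv v

protected theorem Filter.EventuallyEq.dirDeriv (h : F =ᶠ[𝓝 p] G) (v : E) :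
    dirDeriv v F =ᶠ[𝓝 p] dirDeriv v G :=
  h.fderiv.mono fun q hq => show fderiv ℝ F q v = fderiv ℝ G q v by rw [hq]

theorem Filter.EventuallyEq.iterate_dirDeriv (h : F =ᶠ[𝓝 p] G) (v : E) (m : ℕ) :
    (dirDeriv v)^[m] F =ᶠ[𝓝 p] (dirDeriv v)^[m] G := by
  induction m with
  | zero => exact h
  | succ m ih => simpa only [Function.iterate_succ_apply'] using ih.dirDeriv v

theorem dirDeriv_fun_mul (hF : DifferentiableAt ℝ F p) (hG : DifferentiableAt ℝ G p) (v : E) :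
    dirDeriv v (fun q => F q * G q) p = dirDeriv v F p * G p + F p * dirDeriv v G p := by
  simp [dirDeriv, fderiv_fun_mul hF hG]
  ring

theorem dirDeriv_const_mul (hF : DifferentiableAt ℝ F p) (c : ℝ) (v : E) :
    dirDeriv v (fun q => c * F q) p = c * dirDeriv v F p := by
  simp [dirDeriv, fderiv_const_mul hF]

theorem dirDeriv_fun_sum {ι : Type*} {s : Finset ι} {A : ι → E → ℝ}
    (hA : ∀ i ∈ s, DifferentiableAt ℝ (A i) p) (v : E) :
    dirDeriv v (fun q => ∑ i ∈ s, A i q) p = ∑ i ∈ s, dirDeriv v (A i) p := by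
  simp [dirDeriv, fderiv_fun_sum hA]

theorem ContDiffAt.dirDeriv_comm (h : ContDiffAt ℝ 2 F p) (v w : E) :
    dirDeriv v (dirDeriv w F) p = dirDeriv w (dirDeriv v F) p := by
  have hsnd (v w : E) : dirDeriv v (dirDeriv w F) p = fderiv ℝ (fderiv ℝ F) p v w := by
    have hF' : DifferentiableAt ℝ (fderiv ℝ F) p :=
      (h.fderiv_right (m := 1) le_rfl).differentiableAt one_ne_zero
    exact congrArg (· v)
      ((ContinuousLinearMap.apply ℝ ℝ w).hasFDerivAt.comp p hF'.hasFDerivAt).fderiv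
  rw [hsnd, hsnd]
  exact h.isSymmSndFDerivAt (by simp) v w

theorem AnalyticAt.iterate_dirDeriv_comm (h : AnalyticAt ℝ F p) (v w : E) (m : ℕ) :
    (dirDeriv w)^[m] (dirDeriv v F) p = dirDeriv v ((dirDeriv w)^[m] F) p := by
  induction m generalizing F with
  | zero => rfl
  | succ m ih =>
    have hswap : dirDeriv w (dirDeriv v F) =ᶠ[𝓝 p] dirDeriv v (dirDeriv w F) :=
      h.eventually_analyticAt.mono fun q hq => hq.contDiffAt.dirDeriv_comm w v
    rw [Function.iterate_succ_apply, (hswap.iterate_dirDeriv w m).eq_of_nhds,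
      ih (h.dirDeriv w)]
    rfl

theorem AnalyticAt.iterate_dirDeriv_mul (hF : AnalyticAt ℝ F p) (hG : AnalyticAt ℝ G p)
    (v : E) (n : ℕ) :
    (dirDeriv v)^[n] (fun q => F q * G q) p = ∑ i ∈ range (n + 1),
      (n.choose i : ℝ) * ((dirDeriv v)^[i] F p * (dirDeriv v)^[n - i] G p) := by
  induction n generalizing p with
  | zero => simp
  | succ n ih =>
    have hev : (dirDeriv v)^[n] (fun q => F q * G q) =ᶠ[𝓝 p] fun q => ∑ i ∈ range (n + 1),
        (n.choose i : ℝ) * ((dirDeriv v)^[i] F q * (dirDeriv v)^[n - i] G q) :=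
      (hF.eventually_analyticAt.and hG.eventually_analyticAt).mono fun q hq => ih hq.1 hq.2
    have hF' (i : ℕ) := (hF.iterate_dirDeriv v i).differentiableAt
    have hG' (i : ℕ) := (hG.iterate_dirDeriv v i).differentiableAt
    rw [Function.iterate_succ_apply', (hev.dirDeriv v).eq_of_nhds,
      dirDeriv_fun_sum fun i _ => ((hF' i).fun_mul (hG' (n - i))).const_mul _,
      sum_choose_succ_mul (fun i j => (dirDeriv v)^[i] F p * (dirDeriv v)^[j] G p),
      ← sum_add_distrib]
    refine sum_congr rfl fun i hi => ?_
    rw [dirDeriv_const_mul ((hF' i).fun_mul (hG' (n - i))), dirDeriv_fun_mul (hF' i) (hG' (n - i)),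
      ← Function.iterate_succ_apply' (dirDeriv v), ← Function.iterate_succ_apply' (dirDeriv v),
      show n + 1 - i = (n - i).succ by have := mem_range.1 hi; omega]
    ring

theorem iteratedDeriv_comp_line {U : Set E} (hU : IsOpen U) (hF : AnalyticOnNhd ℝ F U)
    (a v : E) (m : ℕ) {τ : ℝ} (hτ : a + τ • v ∈ U) :
    iteratedDeriv m (fun τ => F (a + τ • v)) τ = (dirDeriv v)^[m] F (a + τ • v) := by
  induction m generalizing τ with
  | zero => simp
  | succ m ih =>
    have hline : IsOpen {τ : ℝ | a + τ • v ∈ U} :=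
      hU.preimage (continuous_const.add (continuous_id.smul continuous_const))
    have hev : iteratedDeriv m (fun τ => F (a + τ • v)) =ᶠ[𝓝 τ]
        fun τ => (dirDeriv v)^[m] F (a + τ • v) :=
      Filter.eventually_of_mem (hline.mem_nhds hτ) fun σ hσ => ih hσ
    have hderiv : HasDerivAt (fun τ : ℝ => a + τ • v) v τ := by
      simpa using ((hasDerivAt_id τ).smul_const v).const_add a
    rw [iteratedDeriv_succ, hev.deriv_eq, Function.iterate_succ_apply']
    exact ((AnalyticAt.iterate_dirDeriv (hF _ hτ) v m).differentiableAt.hasFDerivAt.comp_hasDerivAt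
      τ hderiv).deriv

end DirDeriv

local notation "∂ₛ" => dirDeriv ((1, 0) : ℝ × ℝ)
local notation "∂ₜ" => dirDeriv ((0, 1) : ℝ × ℝ)

theorem pd_eq_iterate_dirDeriv {U : Set (ℝ × ℝ)} (hU : IsOpen U) {F : ℝ × ℝ → ℝ}
    (hF : AnalyticOnNhd ℝ F U) (k l : ℕ) {p : ℝ × ℝ} (hp : p ∈ U) :
    pd (fun s t => F (s, t)) k l p.1 p.2 = ∂ₛ^[k] (∂ₜ^[l] F) p := by
  have hslice : IsOpen {s : ℝ | (s, p.2) ∈ U} := hU.preimage (by fun_prop)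
  have hinner : ∀ s ∈ {s : ℝ | (s, p.2) ∈ U},
      iteratedDeriv l (fun t => F (s, t)) p.2 = ∂ₜ^[l] F (s, p.2) := fun s hs => by
    simpa using iteratedDeriv_comp_line hU hF (s, 0) (0, 1) l (τ := p.2) (by simpa using hs)
  have houter := iteratedDeriv_comp_line hU
    (fun q hq => AnalyticAt.iterate_dirDeriv (hF q hq) (0, 1) l) (0, p.2) (1, 0) k (τ := p.1)
    (by simpa using hp)
  simp only [Prod.smul_mk, smul_eq_mul, mul_one, mul_zero, Prod.mk_add_mk, zero_add,
    add_zero] at houter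
  rw [pd, Filter.EventuallyEq.iteratedDeriv_eq k
    (Filter.eventually_of_mem (hslice.mem_nhds hp) hinner), houter]

/-- The `j < 2` guard matters: with truncated subtraction `j - 2 = 0`, the sum would not vanish
for `j = 0, 1`. -/
noncomputable def mixedCoeff (L : ℝ × ℝ → ℝ) : ℕ → ℕ → ℕ → ℝ × ℝ → ℝ
  | 1, 1, j => if j = 2 then L else 0
  | k + 2, 1, j => if j < 2 then 0 else ∂ₛ (mixedCoeff L (k + 1) 1 j) + fun p =>
      ∑ r ∈ Icc (j - 1) (k + 2),
        ((r - 1).choose (j - 2) : ℝ) * mixedCoeff L (k + 1) 1 r p * ∂ₜ^[r + 1 - j] L p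
  | k, l + 2, j => ∂ₜ (mixedCoeff L k (l + 1) j) + mixedCoeff L k (l + 1) (j - 1)
  | _, _, _ => 0

section MixedCoeff

variable (L : ℝ × ℝ → ℝ)

theorem mixedCoeff_one_one (j : ℕ) : mixedCoeff L 1 1 j = if j = 2 then L else 0 := by
  rw [mixedCoeff]

theorem mixedCoeff_add_two_one (k : ℕ) {j : ℕ} (hj : 2 ≤ j) (p : ℝ × ℝ) :
    mixedCoeff L (k + 2) 1 j p = ∂ₛ (mixedCoeff L (k + 1) 1 j) p + ∑ r ∈ Icc (j - 1) (k + 2),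
      ((r - 1).choose (j - 2) : ℝ) * mixedCoeff L (k + 1) 1 r p * ∂ₜ^[r + 1 - j] L p := by
  rw [mixedCoeff, if_neg (by omega), Pi.add_apply]

theorem mixedCoeff_add_two (k l j : ℕ) :
    mixedCoeff L k (l + 2) j = ∂ₜ (mixedCoeff L k (l + 1) j) + mixedCoeff L k (l + 1) (j - 1) := by
  rw [mixedCoeff]

theorem mixedCoeff_of_lt_two {k l j : ℕ} (hj : j < 2) : mixedCoeff L k l j = 0 := by
  induction k, l, j using mixedCoeff.induct with
  | case1 => omega
  | case2 j hj2 => simp [mixedCoeff, hj2]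
  | case3 k j hj2 => simp [mixedCoeff, hj2]
  | case4 k j hj2 => omega
  | case5 k l j ih ih' => simp [mixedCoeff, ih hj, ih' (by omega)]
  | case6 k l j h1 h2 h3 =>
    rw [mixedCoeff.eq_def]
    split <;> simp_all

theorem mixedCoeff_of_lt {k l j : ℕ} (hj : k + l < j) : mixedCoeff L k l j = 0 := by
  induction k, l, j using mixedCoeff.induct with
  | case1 => omega
  | case2 j hj2 => simp [mixedCoeff, hj2]
  | case3 k j hj2 => simp [mixedCoeff, hj2]
  | case4 k j hj2 ih _ =>
    have : Icc (j - 1) (k + 2) = ∅ := Icc_eq_empty (by omega)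
    simp [mixedCoeff, hj2, ih (by omega), this]
    rfl
  | case5 k l j ih ih' => simp [mixedCoeff, ih (by omega), ih' (by omega)]
  | case6 k l j h1 h2 h3 =>
    rw [mixedCoeff.eq_def]
    split <;> simp_all

theorem mixedCoeff_add_two_one_two (k : ℕ) (p : ℝ × ℝ) :
    mixedCoeff L (k + 2) 1 2 p = ∂ₛ (mixedCoeff L (k + 1) 1 2) p +
      ∑ j ∈ Icc 2 (k + 2), mixedCoeff L (k + 1) 1 j p * ∂ₜ^[j - 1] L p := by
  rw [mixedCoeff_add_two_one L k le_rfl, show 2 - 1 = 1 from rfl,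
    ← sum_Icc_succ_bot_of_eq_zero (a := 1) (by simp [mixedCoeff_of_lt_two])]
  refine congrArg _ (sum_congr rfl fun j _ => ?_)
  rw [Nat.choose_zero_right, Nat.cast_one, one_mul, Nat.add_sub_add_right]

theorem mixedCoeff_top {k l : ℕ} (hk : 1 ≤ k) (hl : 1 ≤ l) :
    mixedCoeff L k l (k + l) = L ^ k := by
  suffices ∀ j, j = k + l → mixedCoeff L k l j = L ^ k from this _ rfl
  intro j hj
  induction k, l, j using mixedCoeff.induct with
  | case1 => simp [mixedCoeff]
  | case2 j hj2 => omega
  | case3 k j hj2 => omega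
  | case4 k j _ _ ih =>
    subst hj
    ext p
    rw [mixedCoeff_add_two_one L k (by omega),
      mixedCoeff_of_lt L (show k + 1 + 1 < k + 2 + 1 by omega),
      show k + 2 + 1 - 1 = k + 2 by omega, Icc_self, sum_singleton,
      ih (k + 2) (by omega) le_rfl rfl]
    simp [pow_succ]
  | case5 k l j _ ih' =>
    subst hj
    rw [mixedCoeff_add_two, mixedCoeff_of_lt L (show k + (l + 1) < k + (l + 2) by omega),
      dirDeriv_zero, zero_add, ih' hk (by omega) (by omega)]
  | case6 k l j h1 h2 h3 =>
    obtain rfl | hl2 : l = 1 ∨ 2 ≤ l := by omega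
    · obtain rfl | hk2 : k = 1 ∨ 2 ≤ k := by omega
      · exact (h1 rfl rfl).elim
      · exact (h2 (k - 2) (by omega) rfl).elim
    · exact (h3 (l - 2) (by omega)).elim

protected theorem AnalyticAt.mixedCoeff {p : ℝ × ℝ} (hL : AnalyticAt ℝ L p) (k l j : ℕ) :
    AnalyticAt ℝ (mixedCoeff L k l j) p := by
  have h0 : AnalyticAt ℝ (0 : ℝ × ℝ → ℝ) p := analyticAt_const
  induction k, l, j using mixedCoeff.induct with
  | case1 => simpa [mixedCoeff] using hL
  | case2 j hj2 => simpa [mixedCoeff, hj2] using h0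
  | case3 k j hj2 => simpa [mixedCoeff, hj2] using h0
  | case4 k j hj2 ih ih' =>
    rw [mixedCoeff, if_neg hj2]
    exact (ih.dirDeriv _).add (Finset.analyticAt_fun_sum _ fun r _ =>
      (analyticAt_const.mul (ih' r)).mul (hL.iterate_dirDeriv _ _))
  | case5 k l j ih ih' => rw [mixedCoeff]; exact (ih.dirDeriv _).add ih'
  | case6 k l j h1 h2 h3 =>
    rw [mixedCoeff.eq_def]
    split <;> simp_all

end MixedCoeff

section Representation

variable {U : Set (ℝ × ℝ)} {Ψ L : ℝ × ℝ → ℝ}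

theorem sDeriv_iterate_tDeriv_eq_sum (hU : IsOpen U) (hΨ : AnalyticOnNhd ℝ Ψ U)
    (hL : AnalyticOnNhd ℝ L U) (hfac : Set.EqOn (∂ₛ (∂ₜ Ψ)) (fun q => L q * ∂ₜ^[2] Ψ q) U)
    {j : ℕ} (hj : 1 ≤ j) {p : ℝ × ℝ} (hp : p ∈ U) :
    ∂ₛ (∂ₜ^[j] Ψ) p = ∑ m ∈ Icc 2 (j + 1),
      ((j - 1).choose (m - 2) : ℝ) * (∂ₜ^[j + 1 - m] L p * ∂ₜ^[m] Ψ p) := by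
  obtain ⟨n, rfl⟩ := Nat.exists_eq_add_of_le' hj
  calc ∂ₛ (∂ₜ^[n + 1] Ψ) p = ∂ₜ^[n] (∂ₛ (∂ₜ Ψ)) p :=
        (((hΨ p hp).dirDeriv _).iterate_dirDeriv_comm _ _ n).symm
    _ = ∂ₜ^[n] (fun q => L q * ∂ₜ^[2] Ψ q) p :=
        ((hfac.eventuallyEq_of_mem (hU.mem_nhds hp)).iterate_dirDeriv _ n).eq_of_nhds
    _ = ∑ i ∈ range (n + 1), (n.choose i : ℝ) * (∂ₜ^[i] L p * ∂ₜ^[n - i] (∂ₜ^[2] Ψ) p) :=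
        (hL p hp).iterate_dirDeriv_mul ((hΨ p hp).iterate_dirDeriv _ 2) _ n
    _ = _ := by
      refine sum_nbij' (fun i => n + 2 - i) (fun m => n + 2 - m)
        (fun i hi => by simp only [mem_range, mem_Icc] at hi ⊢; omega)
        (fun m hm => by simp only [mem_range, mem_Icc] at hm ⊢; omega)
        (fun i hi => by simp only [mem_range] at hi; omega)
        (fun m hm => by simp only [mem_Icc] at hm; omega) fun i hi => ?_
      have hi : i ≤ n := Nat.lt_succ_iff.1 (mem_range.1 hi)
      rw [← Function.iterate_add_apply, Nat.add_sub_cancel, show n + 2 - i - 2 = n - i by omega,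
        Nat.choose_symm hi, show n + 1 + 1 - (n + 2 - i) = i by omega,
        show n - i + 2 = n + 2 - i by omega]

theorem sDeriv_sum_mul_iterate_tDeriv (hU : IsOpen U) (hΨ : AnalyticOnNhd ℝ Ψ U)
    (hL : AnalyticOnNhd ℝ L U) (hfac : Set.EqOn (∂ₛ (∂ₜ Ψ)) (fun q => L q * ∂ₜ^[2] Ψ q) U)
    {n : ℕ} {c : ℕ → ℝ × ℝ → ℝ} {p : ℝ × ℝ} (hc : ∀ j, AnalyticAt ℝ (c j) p) (hc₁ : c 1 = 0)
    (hcn : c (n + 1) = 0) (hp : p ∈ U) :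
    ∂ₛ (fun q => ∑ j ∈ Icc 2 n, c j q * ∂ₜ^[j] Ψ q) p = ∑ m ∈ Icc 2 (n + 1),
      (∂ₛ (c m) p + ∑ r ∈ Icc (m - 1) n, ((r - 1).choose (m - 2) : ℝ) * c r p *
        ∂ₜ^[r + 1 - m] L p) * ∂ₜ^[m] Ψ p := by
  have hT (j : ℕ) := ((hΨ p hp).iterate_dirDeriv (0, 1) j).differentiableAt
  have hleib : ∑ j ∈ Icc 1 n, c j p * ∂ₛ (∂ₜ^[j] Ψ) p = ∑ m ∈ Icc 2 (n + 1),
      (∑ r ∈ Icc (m - 1) n, ((r - 1).choose (m - 2) : ℝ) * c r p * ∂ₜ^[r + 1 - m] L p) *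
        ∂ₜ^[m] Ψ p := by
    rw [sum_congr rfl fun j hj => by
      rw [sDeriv_iterate_tDeriv_eq_sum hU hΨ hL hfac (mem_Icc.1 hj).1 hp]]
    simp_rw [mul_sum, sum_mul]
    rw [sum_comm' (t' := Icc 2 (n + 1)) (s' := fun m => Icc (m - 1) n)
      fun j m => by simp only [mem_Icc]; omega]
    exact sum_congr rfl fun m _ => sum_congr rfl fun r _ => by ring
  calc ∂ₛ (fun q => ∑ j ∈ Icc 2 n, c j q * ∂ₜ^[j] Ψ q) p
      = ∑ j ∈ Icc 2 n, (∂ₛ (c j) p * ∂ₜ^[j] Ψ p + c j p * ∂ₛ (∂ₜ^[j] Ψ) p) := by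
        rw [dirDeriv_fun_sum fun j _ => (hc j).differentiableAt.fun_mul (hT j)]
        exact sum_congr rfl fun j _ => dirDeriv_fun_mul (hc j).differentiableAt (hT j) _
    _ = ∑ j ∈ Icc 2 (n + 1), ∂ₛ (c j) p * ∂ₜ^[j] Ψ p +
        ∑ j ∈ Icc 1 n, c j p * ∂ₛ (∂ₜ^[j] Ψ) p := by
        rw [sum_add_distrib]
        congr 1
        exacts [(sum_Icc_succ_top_of_eq_zero (by simp [hcn]) _).symm,
          sum_Icc_succ_bot_of_eq_zero (by simp [hc₁]) _]
    _ = _ := by rw [hleib, ← sum_add_distrib]; exact sum_congr rfl fun m _ => by ring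

theorem tDeriv_sum_mul_iterate_tDeriv {n : ℕ} {c : ℕ → ℝ × ℝ → ℝ} {p : ℝ × ℝ}
    (hc : ∀ j, AnalyticAt ℝ (c j) p) (hΨ : AnalyticAt ℝ Ψ p) (hc₁ : c 1 = 0)
    (hcn : c (n + 1) = 0) :
    ∂ₜ (fun q => ∑ j ∈ Icc 2 n, c j q * ∂ₜ^[j] Ψ q) p =
      ∑ m ∈ Icc 2 (n + 1), (∂ₜ (c m) p + c (m - 1) p) * ∂ₜ^[m] Ψ p := by
  have hT (j : ℕ) := (hΨ.iterate_dirDeriv (0, 1) j).differentiableAt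
  calc ∂ₜ (fun q => ∑ j ∈ Icc 2 n, c j q * ∂ₜ^[j] Ψ q) p
      = ∑ j ∈ Icc 2 n, (∂ₜ (c j) p * ∂ₜ^[j] Ψ p + c j p * ∂ₜ^[j + 1] Ψ p) := by
        rw [dirDeriv_fun_sum fun j _ => (hc j).differentiableAt.fun_mul (hT j)]
        refine sum_congr rfl fun j _ => ?_
        rw [dirDeriv_fun_mul (hc j).differentiableAt (hT j), Function.iterate_succ_apply']
    _ = ∑ j ∈ Icc 2 (n + 1), ∂ₜ (c j) p * ∂ₜ^[j] Ψ p +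
        ∑ j ∈ Icc 1 n, c j p * ∂ₜ^[j + 1] Ψ p := by
        rw [sum_add_distrib]
        congr 1
        exacts [(sum_Icc_succ_top_of_eq_zero (by simp [hcn]) _).symm,
          sum_Icc_succ_bot_of_eq_zero (by simp [hc₁]) _]
    _ = _ := by
        have hshift : ∑ j ∈ Icc 1 n, c j p * ∂ₜ^[j + 1] Ψ p =
            ∑ m ∈ Icc 2 (n + 1), c (m - 1) p * ∂ₜ^[m] Ψ p :=
          sum_Icc_shift (fun m => c (m - 1) p * ∂ₜ^[m] Ψ p) 1 n
        rw [hshift, ← sum_add_distrib]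
        exact sum_congr rfl fun m _ => (add_mul _ _ _).symm

theorem iterate_sDeriv_tDeriv_eq_sum (hU : IsOpen U) (hΨ : AnalyticOnNhd ℝ Ψ U)
    (hL : AnalyticOnNhd ℝ L U) (hfac : Set.EqOn (∂ₛ (∂ₜ Ψ)) (fun q => L q * ∂ₜ^[2] Ψ q) U)
    (k : ℕ) :
    Set.EqOn (∂ₛ^[k + 1] (∂ₜ Ψ))
      (fun p => ∑ j ∈ Icc 2 (k + 2), mixedCoeff L (k + 1) 1 j p * ∂ₜ^[j] Ψ p) U := by
  induction k with
  | zero => intro p hp; simpa [mixedCoeff_one_one] using hfac hp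
  | succ k ih =>
    intro p hp
    rw [Function.iterate_succ_apply',
      ((ih.eventuallyEq_of_mem (hU.mem_nhds hp)).dirDeriv _).eq_of_nhds,
      sDeriv_sum_mul_iterate_tDeriv hU hΨ hL hfac (fun j => (hL p hp).mixedCoeff L (k + 1) 1 j)
        (mixedCoeff_of_lt_two L (by norm_num)) (mixedCoeff_of_lt L (by omega)) hp]
    exact sum_congr rfl fun m hm => by rw [mixedCoeff_add_two_one L k (mem_Icc.1 hm).1]

theorem iterate_sDeriv_iterate_tDeriv_eq_sum (hU : IsOpen U) (hΨ : AnalyticOnNhd ℝ Ψ U)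
    (hL : AnalyticOnNhd ℝ L U) (hfac : Set.EqOn (∂ₛ (∂ₜ Ψ)) (fun q => L q * ∂ₜ^[2] Ψ q) U)
    (k l : ℕ) :
    Set.EqOn (∂ₛ^[k + 1] (∂ₜ^[l + 1] Ψ))
      (fun p => ∑ j ∈ Icc 2 (k + l + 2), mixedCoeff L (k + 1) (l + 1) j p * ∂ₜ^[j] Ψ p) U := by
  induction l with
  | zero => exact iterate_sDeriv_tDeriv_eq_sum hU hΨ hL hfac k
  | succ l ih =>
    intro p hp
    have hcomm : ∂ₛ^[k + 1] (∂ₜ^[l + 2] Ψ) p = ∂ₜ (∂ₛ^[k + 1] (∂ₜ^[l + 1] Ψ)) p := by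
      rw [Function.iterate_succ_apply' (∂ₜ)]
      exact ((hΨ p hp).iterate_dirDeriv _ _).iterate_dirDeriv_comm _ _ _
    rw [hcomm, ((ih.eventuallyEq_of_mem (hU.mem_nhds hp)).dirDeriv _).eq_of_nhds,
      tDeriv_sum_mul_iterate_tDeriv (fun j => (hL p hp).mixedCoeff L (k + 1) (l + 1) j) (hΨ p hp)
        (mixedCoeff_of_lt_two L (by norm_num)) (mixedCoeff_of_lt L (by omega))]
    exact sum_congr rfl fun m _ => by rw [mixedCoeff_add_two]; rfl

end Representation

/-- Existence of the coefficients Q^{k,ℓ}_j with ∂^{k,ℓ}ψ = Σ_{j=2}^{k+ℓ} Q^{k,ℓ}_j ∂^j_tψ,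
satisfying the stated recursive relations. -/
theorem stmt5 (U : Set (ℝ × ℝ)) (hU : IsOpen U)
    (ψ L : ℝ → ℝ → ℝ)
    (hψ : ∀ p ∈ U, AnalyticAt ℝ (fun q : ℝ × ℝ => ψ q.1 q.2) p)
    (hL : ∀ p ∈ U, AnalyticAt ℝ (fun q : ℝ × ℝ => L q.1 q.2) p)
    (hfac : ∀ p ∈ U, pd ψ 1 1 p.1 p.2 = L p.1 p.2 * pd ψ 0 2 p.1 p.2) :
    ∃ Q : ℕ → ℕ → ℕ → ℝ → ℝ → ℝ,
      -- analyticity of the coefficients on U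
      (∀ k l j : ℕ, 1 ≤ k → 1 ≤ l → 2 ≤ j → j ≤ k + l →
        ∀ p ∈ U, AnalyticAt ℝ (fun q : ℝ × ℝ => Q k l j q.1 q.2) p) ∧
      -- the representation ∂^{k,ℓ}ψ = Σ_{j=2}^{k+ℓ} Q^{k,ℓ}_j ∂^j_tψ on U
      (∀ k l : ℕ, 1 ≤ k → 1 ≤ l → ∀ p ∈ U,
        pd ψ k l p.1 p.2 =
          ∑ j ∈ Finset.Icc 2 (k + l), Q k l j p.1 p.2 * pd ψ 0 j p.1 p.2) ∧
      -- Q^{1,1}_2 = L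
      (∀ p ∈ U, Q 1 1 2 p.1 p.2 = L p.1 p.2) ∧
      -- ℓ = 1, j = 2 relation, k ≥ 2
      (∀ k : ℕ, 2 ≤ k → ∀ p ∈ U,
        Q k 1 2 p.1 p.2 =
          pd (Q (k - 1) 1 2) 1 0 p.1 p.2 +
            ∑ j ∈ Finset.Icc 2 k, Q (k - 1) 1 j p.1 p.2 * pd L 0 (j - 1) p.1 p.2) ∧
      -- ℓ = 1, 3 ≤ j ≤ k relation
      (∀ k j : ℕ, 2 ≤ k → 3 ≤ j → j ≤ k → ∀ p ∈ U,
        Q k 1 j p.1 p.2 =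
          pd (Q (k - 1) 1 j) 1 0 p.1 p.2 +
            ∑ r ∈ Finset.Icc (j - 1) k,
              (Nat.choose (r - 1) (j - 2) : ℝ) * Q (k - 1) 1 r p.1 p.2 *
                pd L 0 (r + 1 - j) p.1 p.2) ∧
      -- ℓ = 1, j = k + 1 relation
      (∀ k : ℕ, 1 ≤ k → ∀ p ∈ U, Q k 1 (k + 1) p.1 p.2 = (L p.1 p.2) ^ k) ∧
      -- ℓ ≥ 2, j = 2 relation
      (∀ k l : ℕ, 1 ≤ k → 2 ≤ l → ∀ p ∈ U,
        Q k l 2 p.1 p.2 = pd (Q k (l - 1) 2) 0 1 p.1 p.2) ∧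
      -- ℓ ≥ 2, 3 ≤ j ≤ k + ℓ − 1 relation
      (∀ k l j : ℕ, 1 ≤ k → 2 ≤ l → 3 ≤ j → j ≤ k + l - 1 → ∀ p ∈ U,
        Q k l j p.1 p.2 =
          pd (Q k (l - 1) j) 0 1 p.1 p.2 + Q k (l - 1) (j - 1) p.1 p.2) ∧
      -- ℓ ≥ 2, j = k + ℓ relation
      (∀ k l : ℕ, 1 ≤ k → 2 ≤ l → ∀ p ∈ U,
        Q k l (k + l) p.1 p.2 = (L p.1 p.2) ^ k) := by
  set Λ : ℝ × ℝ → ℝ := fun q => L q.1 q.2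
  have hQ (k l j : ℕ) : AnalyticOnNhd ℝ (mixedCoeff Λ k l j) U := fun p hp =>
    (hL p hp).mixedCoeff Λ k l j
  have hpdψ (k l : ℕ) {p : ℝ × ℝ} (hp : p ∈ U) :
      pd ψ k l p.1 p.2 = ∂ₛ^[k] (∂ₜ^[l] fun q => ψ q.1 q.2) p :=
    pd_eq_iterate_dirDeriv hU hψ k l hp
  have hpdL (l : ℕ) {p : ℝ × ℝ} (hp : p ∈ U) : pd L 0 l p.1 p.2 = ∂ₜ^[l] Λ p :=
    pd_eq_iterate_dirDeriv hU hL 0 l hp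
  have hpdQ (k l j a b : ℕ) {p : ℝ × ℝ} (hp : p ∈ U) :
      pd (fun s t => mixedCoeff Λ k l j (s, t)) a b p.1 p.2 =
        ∂ₛ^[a] (∂ₜ^[b] (mixedCoeff Λ k l j)) p :=
    pd_eq_iterate_dirDeriv hU (hQ k l j) a b hp
  have hfac' : Set.EqOn (∂ₛ (∂ₜ fun q => ψ q.1 q.2))
      (fun q => Λ q * ∂ₜ^[2] (fun q => ψ q.1 q.2) q) U :=
    fun p hp => by simpa [hpdψ _ _ hp] using hfac p hp
  refine ⟨fun k l j s t => mixedCoeff Λ k l j (s, t), fun k l j _ _ _ _ p hp => hQ k l j p hp,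
    fun k l hk hl p hp => ?_, fun p _ => by simp [mixedCoeff_one_one, Λ],
    fun k hk p hp => ?_, fun k j hk hj _ p hp => ?_,
    fun k hk p _ => by simp [mixedCoeff_top Λ hk le_rfl, Λ],
    fun k l _ hl p hp => ?_, fun k l j _ hl _ _ p hp => ?_,
    fun k l hk hl p _ => by simp [mixedCoeff_top Λ hk (by omega : 1 ≤ l), Λ]⟩
  · obtain ⟨k, rfl⟩ := Nat.exists_eq_add_of_le' hk
    obtain ⟨l, rfl⟩ := Nat.exists_eq_add_of_le' hl
    rw [hpdψ _ _ hp, iterate_sDeriv_iterate_tDeriv_eq_sum hU hψ hL hfac' k l hp]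
    exact sum_congr (by ring_nf) fun j _ => by rw [hpdψ 0 j hp]; rfl
  · obtain ⟨k, rfl⟩ := Nat.exists_eq_add_of_le' hk
    simp [hpdQ _ _ _ 1 0 hp, hpdL _ hp, mixedCoeff_add_two_one_two]
  · obtain ⟨k, rfl⟩ := Nat.exists_eq_add_of_le' hk
    simp [hpdQ _ _ _ 1 0 hp, hpdL _ hp, mixedCoeff_add_two_one Λ k (by omega : 2 ≤ j)]
  · obtain ⟨l, rfl⟩ := Nat.exists_eq_add_of_le' hl
    simp [hpdQ _ _ _ 0 1 hp, mixedCoeff_add_two, mixedCoeff_of_lt_two]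
  · obtain ⟨l, rfl⟩ := Nat.exists_eq_add_of_le' hl
    simp [hpdQ _ _ _ 0 1 hp, mixedCoeff_add_two]
end

section
/- Let ψ : ℝ² → ℝ be real-analytic, 1-periodic in each variable, and let (x₀,y₀) be a point with ψ_{st}(x₀,y₀) ≠ 0 and ψ_{tt}(x₀,y₀) = 0. Then there exist integers m₀, n₀ ≥ 2 and r* > 0 such that for all (x,y) with |(x,y)−(x₀,y₀)| < r* the following hold: (i) either ∂^{m₀}_tψ(x₀,y₀) ≠ 0 and A/2 ≤ |∂^{m₀}_tψ(x,y)| ≤ 2A with A = |∂^{m₀}_tψ(x₀,y₀)|, or ∂^{1,m₀}ψ(x₀,y₀) ≠ 0 and (1/2)|∂^{1,m₀}ψ(x₀,y₀)|·|x−x₀| ≤ |∂^{m₀}_tψ(x,y)| ≤ 2|∂^{1,m₀}ψ(x₀,y₀)|·|x−x₀|; (ii) either ∂^{n₀}_sψ(x₀,y₀) ≠ 0 and B/2 ≤ |∂^{n₀}_sψ(x,y)| ≤ 2B with B = |∂^{n₀}_sψ(x₀,y₀)|, or ∂^{n₀,1}ψ(x₀,y₀) ≠ 0 and (1/2)|∂^{n₀,1}ψ(x₀,y₀)|·|y−y₀|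 ≤ |∂^{n₀}_sψ(x,y)| ≤ 2|∂^{n₀,1}ψ(x₀,y₀)|·|y−y₀|; and (iii) D/2 ≤ |ψ_{st}(x,y)| ≤ 2D where D = |ψ_{st}(x₀,y₀)|. -/
open MeasureTheory Filter

/-!
A continuous function that does not vanish at a point stays within a factor 2 of its value
there, which gives (iii) and the first alternatives of (i) and (ii). If instead
`∂^m_t ψ (x₀, y₀) = 0` for every `m ≥ 2`, analyticity makes `∂^m_t ψ (x₀, ·)` vanish
identically, and the mean value theorem in `s` gives
`∂^m_t ψ (x, y) = ∂^{1,m} ψ (ξ, y) · (x - x₀)`. Some `∂^{1,m₀} ψ (x₀, y₀)` with `m₀ ≥ 2` is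
nonzero, for otherwise `t ↦ ∂_s ψ (x₀, t)` would be affine and periodic, hence constant,
contradicting `ψ_{st} (x₀, y₀) ≠ 0`. Part (ii) is part (i) for `(s, t) ↦ ψ (t, s)`, by the
symmetry of mixed partial derivatives of an analytic function.
-/

open Function Set Topology

section PartialDeriv

variable {E : Type*} [NormedAddCommGroup E] [NormedSpace ℝ E] {F : ℝ × ℝ → E}

noncomputable def partialFst (F : ℝ × ℝ → E) (p : ℝ × ℝ) : E := fderiv ℝ F p (1, 0)

noncomputable def partialSnd (F : ℝ × ℝ → E) (p : ℝ × ℝ) : E := fderiv ℝ F p (0, 1)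

theorem fderiv_comp_swap_apply (F : ℝ × ℝ → E) (p v : ℝ × ℝ) :
    fderiv ℝ (F ∘ Prod.swap) p v = fderiv ℝ F p.swap v.swap :=
  congrArg (· v) ((ContinuousLinearEquiv.prodComm ℝ ℝ ℝ).comp_right_fderiv (f := F) (x := p))

theorem partialFst_comp_swap (F : ℝ × ℝ → E) :
    partialFst (F ∘ Prod.swap) = partialSnd F ∘ Prod.swap :=
  funext fun p => fderiv_comp_swap_apply F p (1, 0)

theorem partialSnd_comp_swap (F : ℝ × ℝ → E) :
    partialSnd (F ∘ Prod.swap) = partialFst F ∘ Prod.swap :=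
  funext fun p => fderiv_comp_swap_apply F p (0, 1)

theorem partialFst_iterate_comp_swap (k : ℕ) (F : ℝ × ℝ → E) :
    partialFst^[k] (F ∘ Prod.swap) = partialSnd^[k] F ∘ Prod.swap :=
  (Semiconj.iterate_right (f := (· ∘ Prod.swap)) (fun G => (partialFst_comp_swap G).symm) k F).symm

theorem partialSnd_iterate_comp_swap (k : ℕ) (F : ℝ × ℝ → E) :
    partialSnd^[k] (F ∘ Prod.swap) = partialFst^[k] F ∘ Prod.swap :=
  (Semiconj.iterate_right (f := (· ∘ Prod.swap)) (fun G => (partialSnd_comp_swap G).symm) k F).symm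

theorem partialSnd_partialFst {p : ℝ × ℝ} (hF : ContDiffAt ℝ 2 F p) :
    partialSnd (partialFst F) p = partialFst (partialSnd F) p := by
  have hF' : HasFDerivAt (fderiv ℝ F) (fderiv ℝ (fderiv ℝ F) p) p :=
    ((hF.fderiv_right (m := 1) le_rfl).differentiableAt one_ne_zero).hasFDerivAt
  have happly (v : ℝ × ℝ) :
      fderiv ℝ (fun q => fderiv ℝ F q v) p = (fderiv ℝ (fderiv ℝ F) p).flip v :=
    ((ContinuousLinearMap.apply ℝ E v).hasFDerivAt.comp p hF').fderiv
  change fderiv ℝ (fun q => fderiv ℝ F q (1, 0)) p (0, 1) =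
    fderiv ℝ (fun q => fderiv ℝ F q (0, 1)) p (1, 0)
  rw [happly, happly]
  exact (hF.isSymmSndFDerivAt (by simp)).eq _ _

theorem hasDerivAt_partialFst {x y : ℝ} (hF : DifferentiableAt ℝ F (x, y)) :
    HasDerivAt (fun s => F (s, y)) (partialFst F (x, y)) x :=
  hF.hasFDerivAt.comp_hasDerivAt x ((hasDerivAt_id x).prodMk (hasDerivAt_const x y))

theorem hasDerivAt_partialSnd {x y : ℝ} (hF : DifferentiableAt ℝ F (x, y)) :
    HasDerivAt (fun t => F (x, t)) (partialSnd F (x, y)) y :=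
  hF.hasFDerivAt.comp_hasDerivAt y ((hasDerivAt_const y x).prodMk (hasDerivAt_id y))

variable [CompleteSpace E]

theorem analyticOnNhd_partialFst {s : Set (ℝ × ℝ)} (hF : AnalyticOnNhd ℝ F s) :
    AnalyticOnNhd ℝ (partialFst F) s :=
  (ContinuousLinearMap.apply ℝ E ((1 : ℝ), (0 : ℝ))).comp_analyticOnNhd hF.fderiv

theorem analyticOnNhd_partialSnd {s : Set (ℝ × ℝ)} (hF : AnalyticOnNhd ℝ F s) :
    AnalyticOnNhd ℝ (partialSnd F) s :=
  (ContinuousLinearMap.apply ℝ E ((0 : ℝ), (1 : ℝ))).comp_analyticOnNhd hF.fderiv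

theorem analyticOnNhd_iterate_partialFst {s : Set (ℝ × ℝ)} (hF : AnalyticOnNhd ℝ F s) (k : ℕ) :
    AnalyticOnNhd ℝ (partialFst^[k] F) s := by
  induction k generalizing F with
  | zero => exact hF
  | succ k ih => exact ih (analyticOnNhd_partialFst hF)

theorem analyticOnNhd_iterate_partialSnd {s : Set (ℝ × ℝ)} (hF : AnalyticOnNhd ℝ F s) (l : ℕ) :
    AnalyticOnNhd ℝ (partialSnd^[l] F) s := by
  induction l generalizing F with
  | zero => exact hF
  | succ l ih => exact ih (analyticOnNhd_partialSnd hF)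

theorem partialSnd_iterate_partialFst_iterate (hF : AnalyticOnNhd ℝ F univ) (k l : ℕ) :
    partialSnd^[l] (partialFst^[k] F) = partialFst^[k] (partialSnd^[l] F) := by
  have hcomm : ∀ {G : ℝ × ℝ → E}, AnalyticOnNhd ℝ G univ →
      partialSnd (partialFst^[k] G) = partialFst^[k] (partialSnd G) := by
    induction k with
    | zero => exact fun _ => rfl
    | succ k ih =>
      intro G hG
      rw [iterate_succ_apply, iterate_succ_apply, ih (analyticOnNhd_partialFst hG)]
      congr 1
      funext p
      exact partialSnd_partialFst (hG p trivial).contDiffAt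
  induction l generalizing F with
  | zero => rfl
  | succ l ih =>
    rw [iterate_succ_apply, iterate_succ_apply, hcomm hF, ih (analyticOnNhd_partialSnd hF)]

theorem iteratedDeriv_comp_prodMk_const (hF : AnalyticOnNhd ℝ F univ) (k : ℕ) (y : ℝ) :
    iteratedDeriv k (fun s => F (s, y)) = fun s => partialFst^[k] F (s, y) := by
  induction k generalizing F with
  | zero => rfl
  | succ k ih =>
    have hderiv : deriv (fun s => F (s, y)) = fun s => partialFst F (s, y) :=
      funext fun x => (hasDerivAt_partialFst (hF _ trivial).differentiableAt).deriv
    rw [iteratedDeriv_succ', hderiv, ih (analyticOnNhd_partialFst hF), iterate_succ_apply]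

theorem iteratedDeriv_comp_const_prodMk (hF : AnalyticOnNhd ℝ F univ) (l : ℕ) (x : ℝ) :
    iteratedDeriv l (fun t => F (x, t)) = fun t => partialSnd^[l] F (x, t) := by
  induction l generalizing F with
  | zero => rfl
  | succ l ih =>
    have hderiv : deriv (fun t => F (x, t)) = fun t => partialSnd F (x, t) :=
      funext fun y => (hasDerivAt_partialSnd (hF _ trivial).differentiableAt).deriv
    rw [iteratedDeriv_succ', hderiv, ih (analyticOnNhd_partialSnd hF), iterate_succ_apply]

end PartialDeriv

theorem eq_zero_of_forall_iteratedDeriv_eq_zero {𝕜 E : Type*} [NontriviallyNormedField 𝕜]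
    [CharZero 𝕜] [PreconnectedSpace 𝕜] [NormedAddCommGroup E] [NormedSpace 𝕜 E] [CompleteSpace E]
    {f : 𝕜 → E} (hf : ∀ z, AnalyticAt 𝕜 f z) {a : 𝕜} (h : ∀ n, iteratedDeriv n f a = 0) :
    f = 0 :=
  (AnalyticOnNhd.analyticOrderAt_eq_top_iff_eq_zero a hf).1 <| ENat.eq_top_iff_forall_ge.2
    fun _ => (natCast_le_analyticOrderAt_iff_iteratedDeriv_eq_zero (hf a)).2 fun i _ => h i

theorem deriv_eq_zero_of_periodic {f : ℝ → ℝ} (hf : ∀ x, AnalyticAt ℝ f x) {c : ℝ} (hc : 0 < c)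
    (hper : Periodic f c) {a : ℝ} (h : ∀ n, 2 ≤ n → iteratedDeriv n f a = 0) : deriv f a = 0 := by
  have hdd : deriv (deriv f) = 0 :=
    eq_zero_of_forall_iteratedDeriv_eq_zero (fun x => (hf x).deriv.deriv) (a := a) fun n => by
      rw [← iteratedDeriv_succ', ← iteratedDeriv_succ']
      exact h (n + 2) (by omega)
  have hconst (x : ℝ) : deriv f x = deriv f a :=
    is_const_of_deriv_eq_zero (fun x => (hf x).deriv.differentiableAt) (congrFun hdd) x a
  obtain ⟨ξ, -, hξ⟩ := exists_deriv_eq_zero (lt_add_of_pos_right a hc)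
    (fun x _ => (hf x).continuousAt.continuousWithinAt) (hper a).symm
  rw [← hconst ξ, hξ]

theorem exists_abs_sub_lt_and_sub_eq_mul {g g' : ℝ → ℝ} (hg : ∀ u, HasDerivAt g (g' u) u)
    {a x : ℝ} (hx : x ≠ a) : ∃ ξ, |ξ - a| < |x - a| ∧ g x - g a = g' ξ * (x - a) := by
  have hcont : Continuous g := continuous_iff_continuousAt.2 fun u => (hg u).continuousAt
  rcases hx.lt_or_gt with hlt | hlt
  · obtain ⟨ξ, hξ, hslope⟩ := exists_hasDerivAt_eq_slope g g' hlt hcont.continuousOn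
      fun u _ => hg u
    refine ⟨ξ, ?_, ?_⟩
    · rw [abs_of_neg (by linarith [hξ.2]), abs_of_neg (by linarith)]
      linarith [hξ.1]
    · rw [hslope]
      field_simp [(sub_pos.2 hlt).ne']
      ring
  · obtain ⟨ξ, hξ, hslope⟩ := exists_hasDerivAt_eq_slope g g' hlt hcont.continuousOn
      fun u _ => hg u
    refine ⟨ξ, ?_, ?_⟩
    · rw [abs_of_pos (by linarith [hξ.1]), abs_of_pos (by linarith)]
      linarith [hξ.2]
    · rw [hslope]
      field_simp [(sub_pos.2 hlt).ne']

theorem abs_bounds_of_hasDerivAt_of_eq_zero {g g' : ℝ → ℝ} (hg : ∀ u, HasDerivAt g (g' u) u)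
    {a x c : ℝ} (ha : g a = 0)
    (hg' : ∀ u, |u - a| ≤ |x - a| → |c| / 2 ≤ |g' u| ∧ |g' u| ≤ 2 * |c|) :
    1 / 2 * |c| * |x - a| ≤ |g x| ∧ |g x| ≤ 2 * |c| * |x - a| := by
  rcases eq_or_ne x a with rfl | hx
  · simp [ha]
  obtain ⟨ξ, hξ, hgx⟩ := exists_abs_sub_lt_and_sub_eq_mul hg hx
  rw [ha, sub_zero] at hgx
  obtain ⟨hlow, hupp⟩ := hg' ξ hξ.le
  rw [hgx, abs_mul]
  constructor <;> nlinarith [abs_nonneg (x - a)]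

theorem eventually_half_le_abs_and_abs_le_two_mul {X : Type*} [TopologicalSpace X] {f : X → ℝ}
    {p : X} (hf : ContinuousAt f p) (hp : f p ≠ 0) :
    ∀ᶠ q in 𝓝 p, |f p| / 2 ≤ |f q| ∧ |f q| ≤ 2 * |f p| := by
  have hpos : 0 < |f p| := abs_pos.2 hp
  exact hf.abs.eventually (Icc_mem_nhds (half_lt_self hpos) (by linarith))

section MixedPartial

variable {ψ : ℝ → ℝ → ℝ}

theorem pd_eq_iterate (hψ : AnalyticOnNhd ℝ (uncurry ψ) univ) (k l : ℕ) (s t : ℝ) :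
    pd ψ k l s t = partialFst^[k] (partialSnd^[l] (uncurry ψ)) (s, t) := by
  have hinner : (fun s' => iteratedDeriv l (ψ s') t) =
      fun s' => partialSnd^[l] (uncurry ψ) (s', t) :=
    funext fun s' => congrFun (iteratedDeriv_comp_const_prodMk hψ l s') t
  rw [pd, hinner, iteratedDeriv_comp_prodMk_const (analyticOnNhd_iterate_partialSnd hψ l)]

theorem analyticOnNhd_uncurry_pd (hψ : AnalyticOnNhd ℝ (uncurry ψ) univ) (k l : ℕ) :
    AnalyticOnNhd ℝ (uncurry (pd ψ k l)) univ := by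
  have : uncurry (pd ψ k l) = partialFst^[k] (partialSnd^[l] (uncurry ψ)) :=
    funext fun p => pd_eq_iterate hψ k l p.1 p.2
  rw [this]
  exact analyticOnNhd_iterate_partialFst (analyticOnNhd_iterate_partialSnd hψ l) k

theorem analyticOnNhd_uncurry_flip (hψ : AnalyticOnNhd ℝ (uncurry ψ) univ) :
    AnalyticOnNhd ℝ (uncurry (flip ψ)) univ := by
  rw [uncurry_flip]
  exact fun p _ => (hψ p.swap trivial).comp (analyticAt_snd.prod analyticAt_fst)

theorem pd_flip (hψ : AnalyticOnNhd ℝ (uncurry ψ) univ) (k l : ℕ) (s t : ℝ) :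
    pd (flip ψ) k l t s = pd ψ l k s t := by
  rw [pd_eq_iterate (analyticOnNhd_uncurry_flip hψ), pd_eq_iterate hψ, uncurry_flip,
    partialSnd_iterate_comp_swap, partialFst_iterate_comp_swap, comp_apply, Prod.swap_prod_mk,
    partialSnd_iterate_partialFst_iterate hψ]

theorem hasDerivAt_pd_fst (hψ : AnalyticOnNhd ℝ (uncurry ψ) univ) (k l : ℕ) (s t : ℝ) :
    HasDerivAt (fun s => pd ψ k l s t) (pd ψ (k + 1) l s t) s := by
  have hF := analyticOnNhd_iterate_partialFst (analyticOnNhd_iterate_partialSnd hψ l) k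
  simp only [pd_eq_iterate hψ, iterate_succ_apply']
  exact hasDerivAt_partialFst (hF _ trivial).differentiableAt

theorem hasDerivAt_pd_snd (hψ : AnalyticOnNhd ℝ (uncurry ψ) univ) (k l : ℕ) (s t : ℝ) :
    HasDerivAt (fun t => pd ψ k l s t) (pd ψ k (l + 1) s t) t := by
  simp only [← pd_flip hψ]
  exact hasDerivAt_pd_fst (analyticOnNhd_uncurry_flip hψ) l k t s

theorem iteratedDeriv_pd_snd (hψ : AnalyticOnNhd ℝ (uncurry ψ) univ) (n k l : ℕ) (s : ℝ) :
    iteratedDeriv n (fun t => pd ψ k l s t) = fun t => pd ψ k (l + n) s t := by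
  induction n generalizing l with
  | zero => rfl
  | succ n ih =>
    rw [iteratedDeriv_succ', funext fun t => (hasDerivAt_pd_snd hψ k l s t).deriv, ih,
      Nat.add_right_comm, Nat.add_assoc]

theorem periodic_pd_snd {c : ℝ} (hper : ∀ s, Periodic (ψ s) c) (k l : ℕ) (s : ℝ) :
    Periodic (fun t => pd ψ k l s t) c := by
  intro t
  have (s' : ℝ) : iteratedDeriv l (ψ s') (t + c) = iteratedDeriv l (ψ s') t := by
    rw [← congrFun (iteratedDeriv_comp_add_const l (ψ s') c) t, funext (hper s')]
  simp only [pd, this]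

theorem analyticAt_pd_snd (hψ : AnalyticOnNhd ℝ (uncurry ψ) univ) (k l : ℕ) (s t : ℝ) :
    AnalyticAt ℝ (fun t => pd ψ k l s t) t :=
  (analyticOnNhd_uncurry_pd hψ k l (s, t) trivial).comp (analyticAt_const.prod analyticAt_id)

theorem pd_eq_zero_of_forall_pd_add_eq_zero (hψ : AnalyticOnNhd ℝ (uncurry ψ) univ) {k l : ℕ}
    {s t₀ : ℝ} (h : ∀ n, pd ψ k (l + n) s t₀ = 0) (t : ℝ) : pd ψ k l s t = 0 :=
  congrFun (eq_zero_of_forall_iteratedDeriv_eq_zero (analyticAt_pd_snd hψ k l s) (a := t₀)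
    fun n => by rw [iteratedDeriv_pd_snd hψ]; exact h n) t

end MixedPartial

section Bounds

variable {ψ : ℝ → ℝ → ℝ} {c x₀ y₀ : ℝ}

theorem exists_two_le_pd_one_ne_zero (hψ : AnalyticOnNhd ℝ (uncurry ψ) univ)
    (hper : ∀ s, Periodic (ψ s) c) (hc : 0 < c) (hst : pd ψ 1 1 x₀ y₀ ≠ 0) :
    ∃ m, 2 ≤ m ∧ pd ψ 1 m x₀ y₀ ≠ 0 := by
  by_contra! h
  refine hst ?_
  rw [← (hasDerivAt_pd_snd hψ 1 0 x₀ y₀).deriv]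
  refine deriv_eq_zero_of_periodic (analyticAt_pd_snd hψ 1 0 x₀) hc (periodic_pd_snd hper 1 0 x₀)
    fun n hn => ?_
  rw [iteratedDeriv_pd_snd hψ, zero_add]
  exact h n hn

theorem exists_eventually_bounds_pd_snd (hψ : AnalyticOnNhd ℝ (uncurry ψ) univ)
    (hper : ∀ s, Periodic (ψ s) c) (hc : 0 < c) (hst : pd ψ 1 1 x₀ y₀ ≠ 0) :
    ∃ m₀, 2 ≤ m₀ ∧ ∀ᶠ p : ℝ × ℝ in 𝓝 (x₀, y₀),
      (pd ψ 0 m₀ x₀ y₀ ≠ 0 ∧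
          |pd ψ 0 m₀ x₀ y₀| / 2 ≤ |pd ψ 0 m₀ p.1 p.2| ∧
          |pd ψ 0 m₀ p.1 p.2| ≤ 2 * |pd ψ 0 m₀ x₀ y₀|) ∨
      (pd ψ 1 m₀ x₀ y₀ ≠ 0 ∧
          1 / 2 * |pd ψ 1 m₀ x₀ y₀| * |p.1 - x₀| ≤ |pd ψ 0 m₀ p.1 p.2| ∧
          |pd ψ 0 m₀ p.1 p.2| ≤ 2 * |pd ψ 1 m₀ x₀ y₀| * |p.1 - x₀|) := by
  by_cases hA : ∃ m, 2 ≤ m ∧ pd ψ 0 m x₀ y₀ ≠ 0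
  · obtain ⟨m, hm, hne⟩ := hA
    refine ⟨m, hm, ?_⟩
    filter_upwards [eventually_half_le_abs_and_abs_le_two_mul (f := uncurry (pd ψ 0 m))
      (analyticOnNhd_uncurry_pd hψ 0 m (x₀, y₀) trivial).continuousAt hne] with p hp
    exact Or.inl ⟨hne, hp⟩
  · push Not at hA
    obtain ⟨m, hm, hne⟩ := exists_two_le_pd_one_ne_zero hψ hper hc hst
    have hvan (t : ℝ) : pd ψ 0 m x₀ t = 0 :=
      pd_eq_zero_of_forall_pd_add_eq_zero hψ (fun n => hA (m + n) (by omega)) t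
    have hcomp := eventually_half_le_abs_and_abs_le_two_mul (f := uncurry (pd ψ 1 m))
      (analyticOnNhd_uncurry_pd hψ 1 m (x₀, y₀) trivial).continuousAt hne
    obtain ⟨r, hr, hbound⟩ := Metric.eventually_nhds_iff.1 hcomp
    refine ⟨m, hm, ?_⟩
    filter_upwards [Metric.ball_mem_nhds _ hr] with p hp
    refine Or.inr ⟨hne, abs_bounds_of_hasDerivAt_of_eq_zero (hasDerivAt_pd_fst hψ 0 m · p.2)
      (hvan p.2) fun u hu => hbound (y := (u, p.2)) ?_⟩
    simp only [Metric.mem_ball, Prod.dist_eq, Real.dist_eq] at hp ⊢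
    exact (max_le_max hu le_rfl).trans_lt hp

theorem exists_eventually_bounds_pd_fst (hψ : AnalyticOnNhd ℝ (uncurry ψ) univ)
    (hper : ∀ t, Periodic (fun s => ψ s t) c) (hc : 0 < c) (hst : pd ψ 1 1 x₀ y₀ ≠ 0) :
    ∃ n₀, 2 ≤ n₀ ∧ ∀ᶠ p : ℝ × ℝ in 𝓝 (x₀, y₀),
      (pd ψ n₀ 0 x₀ y₀ ≠ 0 ∧
          |pd ψ n₀ 0 x₀ y₀| / 2 ≤ |pd ψ n₀ 0 p.1 p.2| ∧
          |pd ψ n₀ 0 p.1 p.2| ≤ 2 * |pd ψ n₀ 0 x₀ y₀|) ∨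
      (pd ψ n₀ 1 x₀ y₀ ≠ 0 ∧
          1 / 2 * |pd ψ n₀ 1 x₀ y₀| * |p.2 - y₀| ≤ |pd ψ n₀ 0 p.1 p.2| ∧
          |pd ψ n₀ 0 p.1 p.2| ≤ 2 * |pd ψ n₀ 1 x₀ y₀| * |p.2 - y₀|) := by
  have hst' : pd (flip ψ) 1 1 y₀ x₀ ≠ 0 := by rwa [pd_flip hψ]
  obtain ⟨n, hn, h⟩ := exists_eventually_bounds_pd_snd (analyticOnNhd_uncurry_flip hψ) hper hc hst'
  refine ⟨n, hn, ?_⟩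
  filter_upwards [continuous_swap.continuousAt.eventually h] with p hp
  simpa only [pd_flip hψ, Prod.fst_swap, Prod.snd_swap] using hp

end Bounds

theorem stmt14_general (ψ : ℝ → ℝ → ℝ)
    (hψa : ∀ p : ℝ × ℝ, AnalyticAt ℝ (fun q : ℝ × ℝ => ψ q.1 q.2) p)
    (hp1 : ∀ s t : ℝ, ψ (s + 1) t = ψ s t)
    (hp2 : ∀ s t : ℝ, ψ s (t + 1) = ψ s t)
    (x₀ y₀ : ℝ)
    (hst : pd ψ 1 1 x₀ y₀ ≠ 0) :
    ∃ m₀ n₀ : ℕ, 2 ≤ m₀ ∧ 2 ≤ n₀ ∧ ∃ rs : ℝ, 0 < rs ∧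
      ∀ x y : ℝ, max |x - x₀| |y - y₀| < rs →
        -- (i)
        ((pd ψ 0 m₀ x₀ y₀ ≠ 0 ∧
            |pd ψ 0 m₀ x₀ y₀| / 2 ≤ |pd ψ 0 m₀ x y| ∧
            |pd ψ 0 m₀ x y| ≤ 2 * |pd ψ 0 m₀ x₀ y₀|) ∨
         (pd ψ 1 m₀ x₀ y₀ ≠ 0 ∧
            (1 / 2) * |pd ψ 1 m₀ x₀ y₀| * |x - x₀| ≤ |pd ψ 0 m₀ x y| ∧
            |pd ψ 0 m₀ x y| ≤ 2 * |pd ψ 1 m₀ x₀ y₀| * |x - x₀|)) ∧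
        -- (ii)
        ((pd ψ n₀ 0 x₀ y₀ ≠ 0 ∧
            |pd ψ n₀ 0 x₀ y₀| / 2 ≤ |pd ψ n₀ 0 x y| ∧
            |pd ψ n₀ 0 x y| ≤ 2 * |pd ψ n₀ 0 x₀ y₀|) ∨
         (pd ψ n₀ 1 x₀ y₀ ≠ 0 ∧
            (1 / 2) * |pd ψ n₀ 1 x₀ y₀| * |y - y₀| ≤ |pd ψ n₀ 0 x y| ∧
            |pd ψ n₀ 0 x y| ≤ 2 * |pd ψ n₀ 1 x₀ y₀| * |y - y₀|)) ∧
        -- (iii)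
        (|pd ψ 1 1 x₀ y₀| / 2 ≤ |pd ψ 1 1 x y| ∧
         |pd ψ 1 1 x y| ≤ 2 * |pd ψ 1 1 x₀ y₀|) := by
  have hψ : AnalyticOnNhd ℝ (uncurry ψ) univ := fun p _ => hψa p
  obtain ⟨m₀, hm₀, h₁⟩ := exists_eventually_bounds_pd_snd hψ hp2 one_pos hst
  obtain ⟨n₀, hn₀, h₂⟩ := exists_eventually_bounds_pd_fst hψ (fun t s => hp1 s t) one_pos hst
  have h₃ := eventually_half_le_abs_and_abs_le_two_mul (f := uncurry (pd ψ 1 1))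
    (analyticOnNhd_uncurry_pd hψ 1 1 (x₀, y₀) trivial).continuousAt hst
  obtain ⟨rs, hrs, h⟩ := Metric.eventually_nhds_iff.1 (h₁.and (h₂.and h₃))
  refine ⟨m₀, n₀, hm₀, hn₀, rs, hrs, fun x y hxy => h (y := (x, y)) ?_⟩
  rwa [Prod.dist_eq, Real.dist_eq, Real.dist_eq]

/-- Stable two-sided derivative bounds near a point with ψ_{st} ≠ 0 and ψ_{tt} = 0. -/
theorem stmt14 (ψ : ℝ → ℝ → ℝ)
    (hψa : ∀ p : ℝ × ℝ, AnalyticAt ℝ (fun q : ℝ × ℝ => ψ q.1 q.2) p)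
    (hp1 : ∀ s t : ℝ, ψ (s + 1) t = ψ s t)
    (hp2 : ∀ s t : ℝ, ψ s (t + 1) = ψ s t)
    (x₀ y₀ : ℝ)
    (hst : pd ψ 1 1 x₀ y₀ ≠ 0)
    (htt : pd ψ 0 2 x₀ y₀ = 0) :
    ∃ m₀ n₀ : ℕ, 2 ≤ m₀ ∧ 2 ≤ n₀ ∧ ∃ rs : ℝ, 0 < rs ∧
      ∀ x y : ℝ, max |x - x₀| |y - y₀| < rs →
        -- (i)
        ((pd ψ 0 m₀ x₀ y₀ ≠ 0 ∧
            |pd ψ 0 m₀ x₀ y₀| / 2 ≤ |pd ψ 0 m₀ x y| ∧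
            |pd ψ 0 m₀ x y| ≤ 2 * |pd ψ 0 m₀ x₀ y₀|) ∨
         (pd ψ 1 m₀ x₀ y₀ ≠ 0 ∧
            (1 / 2) * |pd ψ 1 m₀ x₀ y₀| * |x - x₀| ≤ |pd ψ 0 m₀ x y| ∧
            |pd ψ 0 m₀ x y| ≤ 2 * |pd ψ 1 m₀ x₀ y₀| * |x - x₀|)) ∧
        -- (ii)
        ((pd ψ n₀ 0 x₀ y₀ ≠ 0 ∧
            |pd ψ n₀ 0 x₀ y₀| / 2 ≤ |pd ψ n₀ 0 x y| ∧
            |pd ψ n₀ 0 x y| ≤ 2 * |pd ψ n₀ 0 x₀ y₀|) ∨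
         (pd ψ n₀ 1 x₀ y₀ ≠ 0 ∧
            (1 / 2) * |pd ψ n₀ 1 x₀ y₀| * |y - y₀| ≤ |pd ψ n₀ 0 x y| ∧
            |pd ψ n₀ 0 x y| ≤ 2 * |pd ψ n₀ 1 x₀ y₀| * |y - y₀|)) ∧
        -- (iii)
        (|pd ψ 1 1 x₀ y₀| / 2 ≤ |pd ψ 1 1 x y| ∧
         |pd ψ 1 1 x y| ≤ 2 * |pd ψ 1 1 x₀ y₀|) :=
  stmt14_general ψ hψa hp1 hp2 x₀ y₀ hst
end
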